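/- Let |r⟩, |l⟩ ∈ ℂ² with Poisson brackets {r^A, conj(l^B)} = -i δ^{AB} (and {r^A, l^B} = {r^A, r^B} = {l^A, l^B} = 0, plus conjugates). Define J_i = Re⟨l|σ_i|r⟩ and K_i = Im⟨l|σ_i|r⟩. Then {J_i, J_j} = ε_{ijk} J_k, {J_i, K_j} = ε_{ijk} K_k, and {K_i, K_j} = −ε_{ijk} J_k, i.e. (J, K) realize the Lie algebra sl(2,ℂ) ≅ so(3,1). -/
import Mathlib


open BigOperators

noncomputable section

abbrev V : Type := Fin 2 → ℂ

/-- The Pauli matrices. -/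
def pauli : Fin 3 → Matrix (Fin 2) (Fin 2) ℂ
  | 0 => !![0, 1; 1, 0]
  | 1 => !![0, -Complex.I; Complex.I, 0]
  | 2 => !![1, 0; 0, -1]

/-- Functions on the twistor phase space are represented as functions `f r rb l lb` of the
holomorphic coordinates `r, l` and the antiholomorphic coordinates `rb = r̄, lb = l̄`. -/
def dr (f : V → V → V → V → ℂ) (A : Fin 2) (r rb l lb : V) : ℂ :=
  fderiv ℂ (fun x => f x rb l lb) r (Pi.single A 1)
def drb (f : V → V → V → V → ℂ) (A : Fin 2) (r rb l lb : V) : ℂ :=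
  fderiv ℂ (fun x => f r x l lb) rb (Pi.single A 1)
def dl (f : V → V → V → V → ℂ) (A : Fin 2) (r rb l lb : V) : ℂ :=
  fderiv ℂ (fun x => f r rb x lb) l (Pi.single A 1)
def dlb (f : V → V → V → V → ℂ) (A : Fin 2) (r rb l lb : V) : ℂ :=
  fderiv ℂ (fun x => f r rb l x) lb (Pi.single A 1)

/-- The Poisson bracket with `{r^A, l̄^B} = -i δ^{AB}` (hence `{l^A, r̄^B} = -i δ^{AB}`), all
other elementary brackets vanishing, extended as a biderivation. -/
def pbRL (f g : V → V → V → V → ℂ) (r rb l lb : V) : ℂ :=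
  -Complex.I * ∑ A, (dr f A r rb l lb * dlb g A r rb l lb
      - dr g A r rb l lb * dlb f A r rb l lb)
  + -Complex.I * ∑ A, (dl f A r rb l lb * drb g A r rb l lb
      - dl g A r rb l lb * drb f A r rb l lb)

/-- `J_i = Re⟨l|σ_i|r⟩`, written via `⟨l|σ_i|r⟩` and its conjugate `⟨r|σ_i|l⟩`. -/
def Jfun (i : Fin 3) (r rb l lb : V) : ℂ :=
  (1 / 2 : ℂ) * ((∑ A, ∑ B, lb A * pauli i A B * r B) + ∑ A, ∑ B, rb A * pauli i A B * l B)

/-- `K_i = Im⟨l|σ_i|r⟩`. -/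
def Kfun (i : Fin 3) (r rb l lb : V) : ℂ :=
  (-Complex.I / 2) *
    ((∑ A, ∑ B, lb A * pauli i A B * r B) - ∑ A, ∑ B, rb A * pauli i A B * l B)

/-- The Levi-Civita symbol ε_{ijk}. -/
def eps : Fin 3 → Fin 3 → Fin 3 → ℂ := fun i j k =>
  if (i = 0 ∧ j = 1 ∧ k = 2) ∨ (i = 1 ∧ j = 2 ∧ k = 0) ∨ (i = 2 ∧ j = 0 ∧ k = 1) then 1
  else if (i = 0 ∧ j = 2 ∧ k = 1) ∨ (i = 2 ∧ j = 1 ∧ k = 0) ∨ (i = 1 ∧ j = 0 ∧ k = 2) then -1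
  else 0

/-- Evaluation at the phase-space point determined by spinors `r, l`. -/
def conjPt (f : V → V → V → V → ℂ) (r l : V) : ℂ :=
  f r (fun A => (starRingEnd ℂ) (r A)) l (fun A => (starRingEnd ℂ) (l A))


lemma fderiv_affine (a C : ℂ) (c : Fin 2 → ℂ) (v : V) (A : Fin 2) :
    fderiv ℂ (fun x : V => a * ((∑ B, c B * x B) + C)) v (Pi.single A 1) = a * c A := by
  have h : HasFDerivAt (fun x : V => ∑ B, c B * x B)
      (∑ B, c B • (ContinuousLinearMap.proj B : V →L[ℂ] ℂ)) v := by
    have e : (fun x : V => ∑ B, c B * x B)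
        = ⇑(∑ B, c B • (ContinuousLinearMap.proj B : V →L[ℂ] ℂ)) := by
      funext x; simp [ContinuousLinearMap.sum_apply]
    rw [e]; exact ContinuousLinearMap.hasFDerivAt _
  have h2 := (h.add_const C).const_mul a
  rw [h2.fderiv]
  simp only [ContinuousLinearMap.coe_smul', Pi.smul_apply, ContinuousLinearMap.sum_apply,
    ContinuousLinearMap.smul_apply, ContinuousLinearMap.proj_apply, Pi.single_apply,
    smul_eq_mul, mul_ite, mul_one, mul_zero]
  rw [Finset.sum_ite_eq' Finset.univ A c]
  simp

lemma dr_J (i : Fin 3) (A : Fin 2) (r rb l lb : V) :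
    dr (Jfun i) A r rb l lb = (1/2 : ℂ) * ∑ A', lb A' * pauli i A' A := by
  have e : (fun x : V => Jfun i x rb l lb)
      = fun x => (1/2:ℂ) * ((∑ B, (∑ A', lb A' * pauli i A' B) * x B)
          + ∑ A', ∑ B, rb A' * pauli i A' B * l B) := by
    funext x; simp [Jfun, Fin.sum_univ_two]; ring
  rw [dr, e, fderiv_affine]

lemma drb_J (i : Fin 3) (A : Fin 2) (r rb l lb : V) :
    drb (Jfun i) A r rb l lb = (1/2 : ℂ) * ∑ B, pauli i A B * l B := by
  have e : (fun x : V => Jfun i r x l lb)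
      = fun x => (1/2:ℂ) * ((∑ A', (∑ B, pauli i A' B * l B) * x A')
          + ∑ A', ∑ B, lb A' * pauli i A' B * r B) := by
    funext x; simp [Jfun, Fin.sum_univ_two]; ring
  rw [drb, e, fderiv_affine]

lemma dl_J (i : Fin 3) (A : Fin 2) (r rb l lb : V) :
    dl (Jfun i) A r rb l lb = (1/2 : ℂ) * ∑ A', rb A' * pauli i A' A := by
  have e : (fun x : V => Jfun i r rb x lb)
      = fun x => (1/2:ℂ) * ((∑ B, (∑ A', rb A' * pauli i A' B) * x B)
          + ∑ A', ∑ B, lb A' * pauli i A' B * r B) := by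
    funext x; simp [Jfun, Fin.sum_univ_two]; ring
  rw [dl, e, fderiv_affine]

lemma dlb_J (i : Fin 3) (A : Fin 2) (r rb l lb : V) :
    dlb (Jfun i) A r rb l lb = (1/2 : ℂ) * ∑ B, pauli i A B * r B := by
  have e : (fun x : V => Jfun i r rb l x)
      = fun x => (1/2:ℂ) * ((∑ A', (∑ B, pauli i A' B * r B) * x A')
          + ∑ A', ∑ B, rb A' * pauli i A' B * l B) := by
    funext x; simp [Jfun, Fin.sum_univ_two]; ring
  rw [dlb, e, fderiv_affine]

lemma dr_K (i : Fin 3) (A : Fin 2) (r rb l lb : V) :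
    dr (Kfun i) A r rb l lb = (-Complex.I/2) * ∑ A', lb A' * pauli i A' A := by
  have e : (fun x : V => Kfun i x rb l lb)
      = fun x => (-Complex.I/2) * ((∑ B, (∑ A', lb A' * pauli i A' B) * x B)
          + -∑ A', ∑ B, rb A' * pauli i A' B * l B) := by
    funext x; simp [Kfun, Fin.sum_univ_two]; ring
  rw [dr, e, fderiv_affine]

lemma drb_K (i : Fin 3) (A : Fin 2) (r rb l lb : V) :
    drb (Kfun i) A r rb l lb = (Complex.I/2) * ∑ B, pauli i A B * l B := by
  have e : (fun x : V => Kfun i r x l lb)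
      = fun x => (-Complex.I/2) * ((∑ A', (-∑ B, pauli i A' B * l B) * x A')
          + ∑ A', ∑ B, lb A' * pauli i A' B * r B) := by
    funext x; simp [Kfun, Fin.sum_univ_two]; ring
  rw [drb, e, fderiv_affine]; ring

lemma dl_K (i : Fin 3) (A : Fin 2) (r rb l lb : V) :
    dl (Kfun i) A r rb l lb = (Complex.I/2) * ∑ A', rb A' * pauli i A' A := by
  have e : (fun x : V => Kfun i r rb x lb)
      = fun x => (-Complex.I/2) * ((∑ B, (-∑ A', rb A' * pauli i A' B) * x B)
          + ∑ A', ∑ B, lb A' * pauli i A' B * r B) := by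
    funext x; simp [Kfun, Fin.sum_univ_two]; ring
  rw [dl, e, fderiv_affine]; ring

lemma dlb_K (i : Fin 3) (A : Fin 2) (r rb l lb : V) :
    dlb (Kfun i) A r rb l lb = (-Complex.I/2) * ∑ B, pauli i A B * r B := by
  have e : (fun x : V => Kfun i r rb l x)
      = fun x => (-Complex.I/2) * ((∑ A', (∑ B, pauli i A' B * r B) * x A')
          + -∑ A', ∑ B, rb A' * pauli i A' B * l B) := by
    funext x; simp [Kfun, Fin.sum_univ_two]; ring
  rw [dlb, e, fderiv_affine]

lemma I3 : Complex.I ^ 3 = -Complex.I := by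
  rw [show (3:ℕ) = 2+1 from rfl, pow_succ, Complex.I_sq]; ring

lemma I4 : Complex.I ^ 4 = 1 := by
  rw [show (4:ℕ) = 2+2 from rfl, pow_add, Complex.I_sq]; ring

set_option maxHeartbeats 1600000 in

/-- `(J,K)` realize the Lie algebra sl(2,ℂ) ≅ so(3,1):
`{J_i,J_j} = ε_{ijk}J_k`, `{J_i,K_j} = ε_{ijk}K_k`, `{K_i,K_j} = −ε_{ijk}J_k`. -/
theorem stmt13 (r l : V) (i j : Fin 3) :
    conjPt (pbRL (Jfun i) (Jfun j)) r l = ∑ k, eps i j k * conjPt (Jfun k) r l ∧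
    conjPt (pbRL (Jfun i) (Kfun j)) r l = ∑ k, eps i j k * conjPt (Kfun k) r l ∧
    conjPt (pbRL (Kfun i) (Kfun j)) r l = -∑ k, eps i j k * conjPt (Jfun k) r l := by
  fin_cases i <;> fin_cases j <;>
  · refine ⟨?_, ?_, ?_⟩ <;>
    · simp only [conjPt, pbRL, dr_J, drb_J, dl_J, dlb_J, dr_K, drb_K, dl_K, dlb_K, Jfun, Kfun,
        Fin.sum_univ_two, Fin.sum_univ_three]
      norm_num [eps, pauli, Fin.ext_iff]
      try ring_nf
      try simp only [Complex.I_sq, I3, I4]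
      try ring_nf
      try ring
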